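/- arXiv:1711.10132 — 13 statements merged into one kernel-verified Lean document; each statement's English description precedes it below -/
import Mathlib

section
/- Let H be a group acting on a set X. Let ℤ[X] denote the free abelian group on X (finitely supported functions X → ℤ) equipped with the induced H-action permuting basis elements, and let j : ℤ[X^H] → ℤ[X] be the injective homomorphism induced by the inclusion of the fixed-point set X^H into X. Then the image of j equals the subgroup of H-invariant elements of ℤ[X] if and only if every H-orbit in X is either infinite or a single point. -/
/-!
An element of `ℤ[X]` is `H`-invariant exactly when it is constant on `H`-orbits, so its support
is a union of finite orbits, while the image of `ℤ[X^H]` consists of the elements supported on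
`X^H`. Thus the two agree iff every finite orbit is a fixed point: the indicator of a finite orbit
is invariant, and a fixed point is the same as an orbit `{x}`.
-/

open Finsupp MulAction

namespace Finsupp

variable {α M : Type*} [AddCommMonoid M]

theorem mem_range_mapDomain_subtypeVal_iff {s : Set α} (f : α →₀ M) :
    f ∈ Set.range (mapDomain (Subtype.val : s → α)) ↔ ↑f.support ⊆ s := by
  refine (mem_range_mapDomain_iff _ Subtype.val_injective f).trans ?_
  simp only [Subtype.range_coe, Set.subset_def, Finset.mem_coe, mem_support_iff]
  exact forall_congr' fun a => not_imp_comm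

theorem mapDomain_perm_eq_self_iff (e : Equiv.Perm α) (f : α →₀ M) :
    mapDomain e f = f ↔ ∀ a, f (e a) = f a := by
  simp only [Finsupp.ext_iff, mapDomain_equiv_apply]
  exact e.symm.forall_congr fun a => by rw [e.apply_symm_apply, eq_comm]

end Finsupp

namespace MulAction

variable {H X M : Type*} [Group H] [MulAction H X] [AddCommMonoid M]

theorem mapDomain_smul_eq_self_iff (h : H) (f : X →₀ M) :
    mapDomain (fun x => h • x) f = f ↔ ∀ x, f (h • x) = f x :=
  mapDomain_perm_eq_self_iff (toPerm h) f

theorem orbit_subset_support_of_invariant {f : X →₀ M} (hf : ∀ (h : H) x, f (h • x) = f x)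
    {x : X} (hx : x ∈ f.support) : orbit H x ⊆ f.support := by
  rintro _ ⟨h, rfl⟩
  simpa [hf] using hx

theorem invariant_of_support_subset_fixedPoints {f : X →₀ M}
    (hf : ↑f.support ⊆ fixedPoints H X) (h : H) (x : X) : f (h • x) = f x := by
  by_cases hx : x ∈ f.support
  · rw [hf hx h]
  by_cases hhx : h • x ∈ f.support
  · have hxh : h⁻¹ • h • x = h • x := hf hhx h⁻¹
    rw [inv_smul_smul] at hxh
    rw [← hxh]
  rw [notMem_support_iff.mp hx, notMem_support_iff.mp hhx]

theorem smul_mem_orbit_iff {x y : X} (h : H) : h • y ∈ orbit H x ↔ y ∈ orbit H x := by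
  rw [← orbit_eq_iff, orbit_smul, orbit_eq_iff]

theorem exists_invariant_support_eq_orbit {x : X} (hx : (orbit H x).Finite) (m : M)
    (hm : m ≠ 0) :
    ∃ f : X →₀ M, (∀ (h : H) y, f (h • y) = f y) ∧ ↑f.support = orbit H x := by
  classical
  refine ⟨Finsupp.indicator hx.toFinset fun _ _ => m, fun h y => ?_, ?_⟩
  · simp only [indicator_apply, Set.Finite.mem_toFinset, smul_mem_orbit_iff]
  · ext y; simp [hm]

theorem orbit_eq_singleton_iff_mem_fixedPoints {x : X} :
    orbit H x = {x} ↔ x ∈ fixedPoints H X := by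
  rw [Set.eq_singleton_iff_unique_mem, mem_fixedPoints']
  exact and_iff_right (mem_orbit_self x)

theorem forall_invariant_support_subset_fixedPoints_iff [Nontrivial M] :
    (∀ f : X →₀ M, (∀ (h : H) x, f (h • x) = f x) → ↑f.support ⊆ fixedPoints H X) ↔
      ∀ x : X, (orbit H x).Finite → x ∈ fixedPoints H X := by
  constructor
  · intro hsupp x hx
    obtain ⟨m, hm⟩ := exists_ne (0 : M)
    obtain ⟨f, hf, hfx⟩ := exists_invariant_support_eq_orbit hx m hm
    exact hsupp f hf (hfx ▸ mem_orbit_self x)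
  · intro hfin f hf x hx
    exact hfin x (f.support.finite_toSet.subset (orbit_subset_support_of_invariant hf hx))

end MulAction

/-- For a group `H` acting on a set `X`, the image of the natural map
`ℤ[X^H] → ℤ[X]` (induced by the inclusion of the fixed-point set) equals the
subgroup of `H`-invariant elements of `ℤ[X]` (where `H` acts by permuting basis
elements) if and only if every `H`-orbit in `X` is either infinite or a single
point. -/
theorem stmt0 {H X : Type*} [Group H] [MulAction H X] :
    (Set.range (Finsupp.mapDomain
        (Subtype.val : MulAction.fixedPoints H X → X) :
          (MulAction.fixedPoints H X →₀ ℤ) → (X →₀ ℤ)) =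
      {f : X →₀ ℤ | ∀ h : H, Finsupp.mapDomain (fun x => h • x) f = f}) ↔
    ∀ x : X, (MulAction.orbit H x).Infinite ∨ MulAction.orbit H x = {x} := by
  have hrange : Set.range (mapDomain (Subtype.val : fixedPoints H X → X)) =
      {f : X →₀ ℤ | ↑f.support ⊆ fixedPoints H X} :=
    Set.ext mem_range_mapDomain_subtypeVal_iff
  have hinvariant : {f : X →₀ ℤ | ∀ h : H, mapDomain (fun x => h • x) f = f} =
      {f | ∀ (h : H) x, f (h • x) = f x} :=
    Set.ext fun f => forall_congr' fun h => mapDomain_smul_eq_self_iff h f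
  have hsubset : {f : X →₀ ℤ | ↑f.support ⊆ fixedPoints H X} ⊆
      {f | ∀ (h : H) x, f (h • x) = f x} :=
    fun _ => invariant_of_support_subset_fixedPoints
  rw [hrange, hinvariant, Set.Subset.antisymm_iff, and_iff_right hsubset, Set.ofPred_subset_ofPred,
    forall_invariant_support_subset_fixedPoints_iff]
  refine forall_congr' fun x => ?_
  rw [orbit_eq_singleton_iff_mem_fixedPoints, or_iff_not_imp_left, Set.not_infinite]
end

section
/- If a group π satisfies Property N, then π is principal; that is, for all finite subsets S, S' ⊆ π, the index of the subgroup Z(S) ∩ Z(S') in Z(S) is either 1 or infinite. -/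
namespace Subgroup

variable {G : Type*} [Group G] {H K : Subgroup G}

theorem relIndex_eq_one_or_eq_zero_of_pow_mem_imp_mem
    (hH : ∀ a ∈ K, ∀ n : ℕ, 0 < n → a ^ n ∈ H → a ∈ H) :
    H.relIndex K = 1 ∨ H.relIndex K = 0 := by
  refine or_iff_not_imp_right.mpr fun hfin => relIndex_eq_one.mpr fun a ha => ?_
  obtain ⟨n, hn, -, hpow⟩ := exists_pow_mem_of_relIndex_ne_zero hfin ha
  exact hH a ha n hn hpow.1

end Subgroup

/-- A group satisfying Property N is principal: for all finite subsets
`S, S' ⊆ π`, the index of `Z(S) ∩ Z(S')` in `Z(S)` is either `1` or infinite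
(infinite index is encoded by relative index `0`). -/
theorem stmt2 {π : Type*} [Group π]
    (hN : ∀ (a : π) (S : Finset π) (n : ℕ), 1 ≤ n →
      a ^ n ∈ Subgroup.centralizer (S : Set π) → a ∈ Subgroup.centralizer (S : Set π)) :
    ∀ S S' : Finset π,
      (Subgroup.centralizer (S : Set π) ⊓ Subgroup.centralizer (S' : Set π)).relIndex
          (Subgroup.centralizer (S : Set π)) = 1 ∨
      (Subgroup.centralizer (S : Set π) ⊓ Subgroup.centralizer (S' : Set π)).relIndex
          (Subgroup.centralizer (S : Set π)) = 0 := by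
  intro S S'
  rw [Subgroup.inf_relIndex_left]
  exact Subgroup.relIndex_eq_one_or_eq_zero_of_pow_mem_imp_mem fun a _ n hn => hN a S' n hn
end

section
/- Every finitely generated torsion-free nilpotent group satisfies Property N: for every a ∈ π, every finite subset S ⊆ π, and every integer n ≥ 1, if aⁿ ∈ Z(S) then a ∈ Z(S). -/
/-!
If `aⁿ` commutes with `b`, then `aⁿ` commutes with every iterated commutator
`cᵢ = ⁅a, ⁅a, ⋯ ⁅a, b⁆⋯⁆⁆`, and in a nilpotent group `c_N = 1` for some `N`.
Whenever `a` commutes with `cᵢ₊₁ = ⁅a, cᵢ⁆`, one has `1 = ⁅aⁿ, cᵢ⁆ = cᵢ₊₁ⁿ`, so torsion-freeness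
gives `cᵢ₊₁ = 1`. Descending from `N` yields `c₁ = ⁅a, b⁆ = 1`.
-/

open scoped commutatorElement

section

variable {G : Type*} [Group G]

theorem commutatorElement_pow_left_of_commute {a b : G} (h : Commute a ⁅a, b⁆) (n : ℕ) :
    ⁅a ^ n, b⁆ = ⁅a, b⁆ ^ n := by
  induction n with
  | zero => simp
  | succ n ih =>
    rw [pow_succ', commutatorElement_mul_left_eq_conj_mul, ih, (h.pow_right n).eq,
      mul_inv_cancel_right, pow_succ]

theorem isOfFinOrder_commutatorElement_of_commute_pow {a b : G} {n : ℕ} (hn : n ≠ 0)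
    (hab : Commute (a ^ n) b) (h : Commute a ⁅a, b⁆) : IsOfFinOrder ⁅a, b⁆ :=
  isOfFinOrder_iff_pow_eq_one.mpr ⟨n, Nat.pos_of_ne_zero hn, by
    rw [← commutatorElement_pow_left_of_commute h, commutatorElement_eq_one_iff_commute]
    exact hab⟩

def iteratedCommutator (a b : G) (i : ℕ) : G :=
  (fun x => ⁅a, x⁆)^[i] b

@[simp]
theorem iteratedCommutator_zero (a b : G) : iteratedCommutator a b 0 = b := rfl

theorem iteratedCommutator_succ (a b : G) (i : ℕ) :
    iteratedCommutator a b (i + 1) = ⁅a, iteratedCommutator a b i⁆ :=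
  Function.iterate_succ_apply' _ i b

theorem iteratedCommutator_mem {H : Subgroup G} {a b : G} (ha : a ∈ H) (hb : b ∈ H) (i : ℕ) :
    iteratedCommutator a b i ∈ H := by
  induction i with
  | zero => exact hb
  | succ i ih =>
    rw [iteratedCommutator_succ, commutatorElement_def]
    exact H.mul_mem (H.mul_mem (H.mul_mem ha ih) (H.inv_mem ha)) (H.inv_mem ih)

theorem iteratedCommutator_mem_lowerCentralSeries (a b : G) (i : ℕ) :
    iteratedCommutator a b i ∈ (⊤ : Subgroup G).lowerCentralSeries i := by
  induction i with
  | zero => exact Subgroup.mem_top b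
  | succ i ih =>
    rw [iteratedCommutator_succ, Subgroup.lowerCentralSeries_succ, Subgroup.commutator_comm]
    exact Subgroup.commutator_mem_commutator (Subgroup.mem_top a) ih

theorem exists_iteratedCommutator_eq_one [Group.IsNilpotent G] (a b : G) :
    ∃ N, iteratedCommutator a b N = 1 := by
  obtain ⟨N, hN⟩ := Subgroup.nilpotent_iff_lowerCentralSeries.mp ‹Group.IsNilpotent G›
  exact ⟨N, Subgroup.mem_bot.mp (hN ▸ iteratedCommutator_mem_lowerCentralSeries a b N)⟩

theorem Commute.pow_left_iteratedCommutator {a b : G} {n : ℕ} (h : Commute (a ^ n) b)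
    (i : ℕ) : Commute (a ^ n) (iteratedCommutator a b i) := by
  have hmem := iteratedCommutator_mem (H := Subgroup.centralizer {a ^ n})
    (Subgroup.mem_centralizer_singleton_iff.mpr ((Commute.refl a).pow_right n).eq)
    (Subgroup.mem_centralizer_singleton_iff.mpr h.eq.symm) i
  exact (Subgroup.mem_centralizer_singleton_iff.mp hmem).symm

theorem iteratedCommutator_succ_eq_one {a b : G} {n : ℕ}
    (htf : ∀ g : G, g ≠ 1 → ¬IsOfFinOrder g) (hn : n ≠ 0) (h : Commute (a ^ n) b) {i : ℕ}
    (hi : iteratedCommutator a b (i + 2) = 1) : iteratedCommutator a b (i + 1) = 1 := by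
  rw [iteratedCommutator_succ, iteratedCommutator_succ, commutatorElement_eq_one_iff_commute] at hi
  rw [iteratedCommutator_succ]
  by_contra hne
  exact htf _ hne
    (isOfFinOrder_commutatorElement_of_commute_pow hn (h.pow_left_iteratedCommutator i) hi)

theorem Commute.of_pow_left_of_isNilpotent [Group.IsNilpotent G]
    (htf : ∀ g : G, g ≠ 1 → ¬IsOfFinOrder g) {a b : G} {n : ℕ} (hn : n ≠ 0)
    (h : Commute (a ^ n) b) : Commute a b := by
  obtain ⟨N, hN⟩ := exists_iteratedCommutator_eq_one a b
  have hN' : iteratedCommutator a b (N + 1) = 1 := by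
    rw [iteratedCommutator_succ, hN, commutatorElement_one_right]
  have descend : ∀ k, iteratedCommutator a b (k + 1) = 1 → iteratedCommutator a b 1 = 1 := by
    intro k
    induction k with
    | zero => exact id
    | succ k ih => exact fun hk => ih (iteratedCommutator_succ_eq_one htf hn h hk)
  rw [← commutatorElement_eq_one_iff_commute, ← iteratedCommutator_zero a b,
    ← iteratedCommutator_succ]
  exact descend N hN'

end

theorem stmt3_general {π : Type*} [Group π] [Group.IsNilpotent π]
    (htf : ∀ g : π, g ≠ 1 → ¬IsOfFinOrder g) :
    ∀ (a : π) (S : Finset π) (n : ℕ), 1 ≤ n →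
      a ^ n ∈ Subgroup.centralizer (S : Set π) → a ∈ Subgroup.centralizer (S : Set π) := by
  intro a S n hn hmem
  rw [Subgroup.mem_centralizer_iff] at hmem ⊢
  exact fun s hs => (Commute.of_pow_left_of_isNilpotent htf (by omega) (hmem s hs).symm).symm

/-- Every finitely generated torsion-free nilpotent group satisfies Property N:
if `aⁿ ∈ Z(S)` for some finite set `S` and some `n ≥ 1`, then `a ∈ Z(S)`. -/
theorem stmt3 {π : Type*} [Group π] [Group.FG π] [Group.IsNilpotent π]
    (htf : ∀ g : π, g ≠ 1 → ¬IsOfFinOrder g) :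
    ∀ (a : π) (S : Finset π) (n : ℕ), 1 ≤ n →
      a ^ n ∈ Subgroup.centralizer (S : Set π) → a ∈ Subgroup.centralizer (S : Set π) :=
  stmt3_general htf
end

section
/- Let π be a torsion-free group such that the centralizer Z({g}) of every nontrivial element g ∈ π is cyclic. Then for any two nontrivial elements g₁, g₂ ∈ π, either Z({g₁}) = Z({g₂}) or Z({g₁}) ∩ Z({g₂}) is the trivial subgroup. -/
/-- A monoid is torsion-free if every non-identity element has infinite order (the
Mathlib definition of December 2024, since removed). -/
def Monoid.IsTorsionFree (G : Type*) [Monoid G] : Prop :=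
  ∀ g : G, g ≠ 1 → ¬IsOfFinOrder g

/-!
Cyclic centralizers are abelian, and when `Z(g)` is abelian every `h ∈ Z(g)` commutes with all
of `Z(g)`, so `Z(g) ≤ Z(h)`; since then also `g ∈ Z(h)`, `Z(g) = Z(h)` for `h ≠ 1`. A nontrivial
`h ∈ Z(g₁) ⊓ Z(g₂)` therefore gives `Z(g₁) = Z(h) = Z(g₂)`.
-/

namespace Subgroup

variable {G : Type*} [Group G]

theorem centralizer_le_centralizer_of_mem {g h : G} [IsMulCommutative (centralizer {g})]
    (hh : h ∈ centralizer {g}) : centralizer {g} ≤ centralizer {h} :=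
  (le_centralizer _).trans (centralizer_le (Set.singleton_subset_iff.mpr hh))

theorem centralizer_eq_of_mem {g h : G} [IsMulCommutative (centralizer {g})]
    [IsMulCommutative (centralizer {h})] (hh : h ∈ centralizer {g}) :
    centralizer {g} = centralizer {h} := by
  have hg : g ∈ centralizer {h} :=
    mem_centralizer_singleton_iff.mpr (mem_centralizer_singleton_iff.mp hh).symm
  exact le_antisymm (centralizer_le_centralizer_of_mem hh) (centralizer_le_centralizer_of_mem hg)

theorem centralizer_eq_or_inf_eq_bot
    (hcomm : ∀ g : G, g ≠ 1 → IsMulCommutative (centralizer {g})) {g₁ g₂ : G}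
    (h₁ : g₁ ≠ 1) (h₂ : g₂ ≠ 1) :
    centralizer {g₁} = centralizer {g₂} ∨ centralizer {g₁} ⊓ centralizer {g₂} = ⊥ := by
  obtain hbot | ⟨h, ⟨hh₁, hh₂⟩, hh⟩ := bot_or_exists_ne_one (centralizer {g₁} ⊓ centralizer {g₂})
  · exact Or.inr hbot
  · have := hcomm g₁ h₁
    have := hcomm g₂ h₂
    have := hcomm h hh
    exact Or.inl ((centralizer_eq_of_mem hh₁).trans (centralizer_eq_of_mem hh₂).symm)

end Subgroup

theorem stmt6_general {π : Type*} [Group π]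
    (hcyc : ∀ g : π, g ≠ 1 → ∃ x : π, Subgroup.centralizer {g} = Subgroup.zpowers x) :
    ∀ g₁ g₂ : π, g₁ ≠ 1 → g₂ ≠ 1 →
      Subgroup.centralizer {g₁} = Subgroup.centralizer {g₂} ∨
      Subgroup.centralizer {g₁} ⊓ Subgroup.centralizer {g₂} = ⊥ := by
  refine fun g₁ g₂ => Subgroup.centralizer_eq_or_inf_eq_bot fun g hg => ?_
  obtain ⟨x, hx⟩ := hcyc g hg
  rw [hx]
  infer_instance

/-- In a torsion-free group in which the centralizer of every nontrivial
element is cyclic, any two centralizers of nontrivial elements either coincide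
or intersect trivially. -/
theorem stmt6 {π : Type*} [Group π] (htf : Monoid.IsTorsionFree π)
    (hcyc : ∀ g : π, g ≠ 1 → ∃ x : π, Subgroup.centralizer {g} = Subgroup.zpowers x) :
    ∀ g₁ g₂ : π, g₁ ≠ 1 → g₂ ≠ 1 →
      Subgroup.centralizer {g₁} = Subgroup.centralizer {g₂} ∨
      Subgroup.centralizer {g₁} ⊓ Subgroup.centralizer {g₂} = ⊥ :=
  stmt6_general hcyc
end

section
/- Let π be a torsion-free group such that the centralizer Z({g}) of every nontrivial element g ∈ π is cyclic. Then π satisfies Property N: for every a ∈ π, every finite subset S ⊆ π, and every integer n ≥ 1, if aⁿ ∈ Z(S) then a ∈ Z(S). -/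
theorem Monoid.IsTorsionFree.pow_ne_one {G : Type*} [Monoid G] (h : Monoid.IsTorsionFree G)
    {a : G} (ha : a ≠ 1) {n : ℕ} (hn : n ≠ 0) : a ^ n ≠ 1 := fun han ↦
  h a ha (isOfFinOrder_iff_pow_eq_one.mpr ⟨n, Nat.pos_of_ne_zero hn, han⟩)

theorem Commute.of_isMulCommutative_centralizer {G : Type*} [Group G] {g a b : G}
    [IsMulCommutative (Subgroup.centralizer {g})] (ha : Commute a g) (hb : Commute b g) :
    Commute a b :=
  setLike_mul_comm
    (Subgroup.mem_centralizer_singleton_iff.mpr ha) (Subgroup.mem_centralizer_singleton_iff.mpr hb)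

/-- A torsion-free group in which the centralizer of every nontrivial element
is cyclic satisfies Property N: if `aⁿ ∈ Z(S)` for some finite set `S` and some
`n ≥ 1`, then `a ∈ Z(S)`. -/
theorem stmt7 {π : Type*} [Group π] (htf : Monoid.IsTorsionFree π)
    (hcyc : ∀ g : π, g ≠ 1 → ∃ x : π, Subgroup.centralizer {g} = Subgroup.zpowers x) :
    ∀ (a : π) (S : Finset π) (n : ℕ), 1 ≤ n →
      a ^ n ∈ Subgroup.centralizer (S : Set π) → a ∈ Subgroup.centralizer (S : Set π) := by
  intro a S n hn han
  rcases eq_or_ne a 1 with rfl | ha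
  · exact Subgroup.one_mem _
  obtain ⟨x, hx⟩ := hcyc (a ^ n) (htf.pow_ne_one ha (by omega))
  have : IsMulCommutative (Subgroup.centralizer {a ^ n}) := hx ▸ inferInstance
  refine Subgroup.mem_centralizer_iff.mpr fun s hs ↦ ?_
  exact (Commute.self_pow a n |>.of_isMulCommutative_centralizer
    (Subgroup.mem_centralizer_iff.mp han s hs)).symm.eq
end

section
/- Let π be a torsion-free group such that the centralizer Z({g}) of every nontrivial element g ∈ π is cyclic. Then π is principal: for all finite subsets S, S' ⊆ π, the index of Z(S) ∩ Z(S') in Z(S) is either 1 or infinite. -/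
/-!
If `g ∈ Z(S)` and `Z(S) ∩ Z(S')` has finite index in `Z(S)`, some power `g ^ n` with `n > 0`
lies in `Z(S')`. Torsion-freeness gives `g ^ n ≠ 1`, so `g` and all of `S'` lie in the abelian
group `Z(g ^ n)`; hence `g ∈ Z(S')`, and the index is `1`.
-/

namespace Subgroup

variable {G : Type*} [Group G]

theorem relIndex_inf_eq_one_or_zero_of_pow_mem {K : Subgroup G}
    (hK : ∀ (g : G) (n : ℕ), 0 < n → g ^ n ∈ K → g ∈ K) (H : Subgroup G) :
    (H ⊓ K).relIndex H = 1 ∨ (H ⊓ K).relIndex H = 0 := by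
  refine or_iff_not_imp_right.mpr fun hfin => relIndex_eq_one.mpr fun g hg => ⟨hg, ?_⟩
  obtain ⟨n, hn, -, hgn⟩ := exists_pow_mem_of_relIndex_ne_zero hfin hg
  exact hK g n hn hgn.1.2

theorem commute_of_mem_zpowers {x a b : G} (ha : a ∈ zpowers x) (hb : b ∈ zpowers x) :
    Commute a b := by
  obtain ⟨i, rfl⟩ := ha
  obtain ⟨j, rfl⟩ := hb
  exact Commute.zpow_zpow_self x i j

end Subgroup

section

open Subgroup

variable {G : Type*} [Group G]

theorem commute_of_commute_pow (htf : Monoid.IsTorsionFree G)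
    (hcomm : ∀ z : G, z ≠ 1 → ∀ a ∈ centralizer {z}, ∀ b ∈ centralizer {z}, Commute a b)
    {g s : G} {n : ℕ} (hn : 0 < n) (h : Commute (g ^ n) s) : Commute g s := by
  rcases eq_or_ne g 1 with rfl | hg
  · exact Commute.one_left s
  have hgn : g ^ n ≠ 1 := fun h1 => htf g hg (isOfFinOrder_iff_pow_eq_one.mpr ⟨n, hn, h1⟩)
  exact hcomm (g ^ n) hgn g (mem_centralizer_singleton_iff.mpr (Commute.self_pow g n)) s
    (mem_centralizer_singleton_iff.mpr h.symm)

theorem mem_centralizer_of_pow_mem (htf : Monoid.IsTorsionFree G)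
    (hcomm : ∀ z : G, z ≠ 1 → ∀ a ∈ centralizer {z}, ∀ b ∈ centralizer {z}, Commute a b)
    (T : Set G) {g : G} {n : ℕ} (hn : 0 < n) (hgn : g ^ n ∈ centralizer T) :
    g ∈ centralizer T :=
  fun s hs => (commute_of_commute_pow htf hcomm hn (hgn s hs).symm).symm

end

/-- A torsion-free group in which the centralizer of every nontrivial element
is cyclic is principal: for all finite subsets `S, S' ⊆ π`, the index of
`Z(S) ∩ Z(S')` in `Z(S)` is either `1` or infinite (infinite index is encoded
by relative index `0`). -/
theorem stmt8 {π : Type*} [Group π] (htf : Monoid.IsTorsionFree π)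
    (hcyc : ∀ g : π, g ≠ 1 → ∃ x : π, Subgroup.centralizer {g} = Subgroup.zpowers x) :
    ∀ S S' : Finset π,
      (Subgroup.centralizer (S : Set π) ⊓ Subgroup.centralizer (S' : Set π)).relIndex
          (Subgroup.centralizer (S : Set π)) = 1 ∨
      (Subgroup.centralizer (S : Set π) ⊓ Subgroup.centralizer (S' : Set π)).relIndex
          (Subgroup.centralizer (S : Set π)) = 0 := by
  intro S S'
  have hcomm : ∀ z : π, z ≠ 1 →
      ∀ a ∈ Subgroup.centralizer {z}, ∀ b ∈ Subgroup.centralizer {z}, Commute a b := by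
    intro z hz a ha b hb
    obtain ⟨x, hx⟩ := hcyc z hz
    rw [hx] at ha hb
    exact Subgroup.commute_of_mem_zpowers ha hb
  exact Subgroup.relIndex_inf_eq_one_or_zero_of_pow_mem
    (fun g _ hn hgn => mem_centralizer_of_pow_mem htf hcomm _ hn hgn) _
end

section
/- Let K be the Klein bottle group, realized as the semidirect product ℤ ⋊ ℤ in which the generator of the second factor acts on ℤ by negation, and set a = (1, 0). Then the centralizer Z({a}) has index 2 in K. Consequently (taking S = ∅ and S' = {a}, so that Z(S) = K) the group K is not principal. -/
/-!
Since `ℤ` is abelian, `x` commutes with `a = inl 1` exactly when the action of `x.right` fixes `1`,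
i.e. when `x.right` is even. So `Z({a})` is the preimage of `2ℤ` under `K → ℤ` and has index `2`,
while `Z(∅) = K`; the pair `S = ∅`, `S' = {a}` thus violates principality.
-/

/-- The action of the generator of the second `ℤ` factor on the first: the
nontrivial automorphism (negation, written multiplicatively as inversion). -/
def kleinAction : Multiplicative ℤ →* MulAut (Multiplicative ℤ) :=
  zpowersHom (MulAut (Multiplicative ℤ)) (MulEquiv.inv (Multiplicative ℤ))

/-- The Klein bottle group `K = ⟨a, b | b a b⁻¹ = a⁻¹⟩`, realized as the
semidirect product `ℤ ⋊ ℤ` in which the generator of the second factor acts on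
`ℤ` by negation. -/
abbrev KleinBottleGroup : Type :=
  SemidirectProduct (Multiplicative ℤ) (Multiplicative ℤ) kleinAction

/-- The element `a = (1, 0)` of the Klein bottle group. -/
def kleinA : KleinBottleGroup := SemidirectProduct.inl (Multiplicative.ofAdd (1 : ℤ))

/-- `Subgroup.relIndex` encodes an infinite index as `0`. -/
def Group.IsPrincipal (G : Type*) [Group G] : Prop :=
  ∀ S S' : Finset G,
    (Subgroup.centralizer (S : Set G) ⊓ Subgroup.centralizer (S' : Set G)).relIndex
        (Subgroup.centralizer (S : Set G)) = 1 ∨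
      (Subgroup.centralizer (S : Set G) ⊓ Subgroup.centralizer (S' : Set G)).relIndex
        (Subgroup.centralizer (S : Set G)) = 0

theorem Group.not_isPrincipal_of_index_centralizer {G : Type*} [Group G] (g : G)
    (h₀ : (Subgroup.centralizer {g}).index ≠ 0) (h₁ : (Subgroup.centralizer {g}).index ≠ 1) :
    ¬ Group.IsPrincipal G := by
  intro h
  have hempty : Subgroup.centralizer ((∅ : Finset G) : Set G) = ⊤ :=
    Subgroup.centralizer_eq_top_iff_subset.2 (by simp)
  have hS := h ∅ {g}
  rw [hempty, top_inf_eq, Subgroup.relIndex_top_right, Finset.coe_singleton] at hS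
  omega

theorem SemidirectProduct.mem_centralizer_singleton_inl_iff {N G : Type*} [CommGroup N] [Group G]
    {φ : G →* MulAut N} (n : N) (x : N ⋊[φ] G) :
    x ∈ Subgroup.centralizer {inl n} ↔ φ x.right n = n := by
  rw [Subgroup.mem_centralizer_singleton_iff, SemidirectProduct.ext_iff]
  simp [mul_comm n, eq_comm]

theorem kleinAction_apply (k : Multiplicative ℤ) (n : Multiplicative ℤ) :
    kleinAction k n = n ^ ((Multiplicative.toAdd k).negOnePow : ℤ) := by
  induction k using Multiplicative.rec with | ofAdd k => ?_
  induction k using Int.induction_on generalizing n with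
  | zero => simp [kleinAction]
  | succ k ih =>
    rw [ofAdd_add, map_mul, MulAut.mul_apply, ih]
    simp [kleinAction, Int.negOnePow_succ, zpow_neg]
  | pred k ih =>
    rw [sub_eq_add_neg, ofAdd_add, map_mul, MulAut.mul_apply, ih]
    simp [kleinAction, Int.negOnePow_add, zpow_neg]

theorem mem_centralizer_kleinA_iff (x : KleinBottleGroup) :
    x ∈ Subgroup.centralizer {kleinA} ↔ Even (Multiplicative.toAdd x.right) := by
  rw [kleinA, SemidirectProduct.mem_centralizer_singleton_inl_iff, kleinAction_apply,
    ← ofAdd_zsmul, zsmul_one, Int.cast_id, Multiplicative.ofAdd.injective.eq_iff, Units.val_eq_one,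
    Int.negOnePow_eq_one_iff]

theorem index_centralizer_kleinA : (Subgroup.centralizer {kleinA}).index = 2 := by
  refine Subgroup.index_eq_two_iff.2 ⟨SemidirectProduct.inr (Multiplicative.ofAdd 1), fun x => ?_⟩
  simp only [mem_centralizer_kleinA_iff, SemidirectProduct.mul_right,
    SemidirectProduct.right_inr, toAdd_mul, toAdd_ofAdd, Int.even_add_one]
  exact xor_not_left.2 Iff.rfl

/-- In the Klein bottle group, the centralizer `Z({a})` has index `2`;
consequently (taking `S = ∅` and `S' = {a}`, so that `Z(S) = K`) the Klein
bottle group is not principal (infinite index is encoded by relative index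
`0`). -/
theorem stmt10 :
    (Subgroup.centralizer {kleinA}).index = 2 ∧
    ¬ (∀ S S' : Finset KleinBottleGroup,
        (Subgroup.centralizer (S : Set KleinBottleGroup) ⊓
            Subgroup.centralizer (S' : Set KleinBottleGroup)).relIndex
          (Subgroup.centralizer (S : Set KleinBottleGroup)) = 1 ∨
        (Subgroup.centralizer (S : Set KleinBottleGroup) ⊓
            Subgroup.centralizer (S' : Set KleinBottleGroup)).relIndex
          (Subgroup.centralizer (S : Set KleinBottleGroup)) = 0) := by
  refine ⟨index_centralizer_kleinA, Group.not_isPrincipal_of_index_centralizer kleinA ?_ ?_⟩ <;>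
    simp [index_centralizer_kleinA]
end

section
/- Let π be a group acting on itself via the action of π × π given by (x, y) · g = x g y⁻¹, and let g₀, g₁, …, g_k ∈ π. Then the intersection of the stabilizers of g₀, …, g_k in π × π equals H_{b, S}, where b = g₀⁻¹ and S = {gᵢ gⱼ⁻¹ : 0 ≤ i, j ≤ k}; that is, it equals {(a, g₀⁻¹ a g₀) : a ∈ Z(S)}. -/
/-- For the action of `π × π` on `π` given by `(x, y) · g = x g y⁻¹` and
elements `g₀, …, g_k ∈ π`, the intersection of the stabilizers of the `gᵢ`
equals `H_{b,S} = {(a, b a b⁻¹) : a ∈ Z(S)}` with `b = g₀⁻¹` and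
`S = {gᵢ gⱼ⁻¹}`. -/
theorem stmt12 {π : Type*} [Group π] (k : ℕ) (g : Fin (k + 1) → π) :
    (⋂ i : Fin (k + 1), {p : π × π | p.1 * g i * p.2⁻¹ = g i}) =
      {p : π × π | ∃ a ∈ Subgroup.centralizer
          {x : π | ∃ i j : Fin (k + 1), x = g i * (g j)⁻¹},
        p = (a, (g 0)⁻¹ * a * g 0)} := by
  ext p
  simp only [Set.mem_iInter, Set.mem_setOf_eq]
  constructor
  · intro h
    have key : ∀ i, p.1 * g i = g i * p.2 := by
      intro i
      have hi := h i
      calc p.1 * g i = p.1 * g i * p.2⁻¹ * p.2 := by group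
        _ = g i * p.2 := by rw [hi]
    refine ⟨p.1, ?_, ?_⟩
    · rw [Subgroup.mem_centralizer_iff]
      rintro x ⟨i, j, rfl⟩
      calc g i * (g j)⁻¹ * p.1 = g i * ((g j)⁻¹ * p.1) := by group
        _ = g i * (p.2 * (g j)⁻¹) := by
            congr 1
            have := key j
            calc (g j)⁻¹ * p.1 = (g j)⁻¹ * ((p.1 * g j) * (g j)⁻¹) := by group
              _ = (g j)⁻¹ * ((g j * p.2) * (g j)⁻¹) := by rw [this]
              _ = p.2 * (g j)⁻¹ := by group
        _ = (g i * p.2) * (g j)⁻¹ := by group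
        _ = (p.1 * g i) * (g j)⁻¹ := by rw [← key i]
        _ = p.1 * (g i * (g j)⁻¹) := by group
    · have h0 := key 0
      have : p.2 = (g 0)⁻¹ * p.1 * g 0 := by
        calc p.2 = (g 0)⁻¹ * (g 0 * p.2) := by group
          _ = (g 0)⁻¹ * (p.1 * g 0) := by rw [← h0]
          _ = (g 0)⁻¹ * p.1 * g 0 := by group
      exact Prod.ext rfl this
  · rintro ⟨a, ha, rfl⟩ i
    have comm := Subgroup.mem_centralizer_iff.mp ha (g i * (g 0)⁻¹) ⟨i, 0, rfl⟩
    have : a * (g i * (g 0)⁻¹) = (g i * (g 0)⁻¹) * a := comm.symm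
    calc a * g i * ((g 0)⁻¹ * a * g 0)⁻¹
        = (a * (g i * (g 0)⁻¹)) * a⁻¹ * g 0 := by group
      _ = ((g i * (g 0)⁻¹) * a) * a⁻¹ * g 0 := by rw [this]
      _ = g i := by group
end

section
/- Let π be a group acting on itself via the action of π × π given by (x, y) · g = x g y⁻¹, let b ∈ π and let S ⊆ π. Then the set of fixed points of the subgroup H_{b,S} ⊆ π × π acting on π, namely {g ∈ π : a g (b a b⁻¹)⁻¹ = g for all a ∈ Z(S)}, equals the coset Z(Z(S)) · b⁻¹ of the double centralizer of S. -/
/-- For the action of `π × π` on `π` given by `(x, y) · g = x g y⁻¹`, the fixed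
point set of the subgroup `H_{b,S} = {(a, b a b⁻¹) : a ∈ Z(S)}`, namely
`{g : π | a g (b a b⁻¹)⁻¹ = g for all a ∈ Z(S)}`, equals the coset
`Z(Z(S)) · b⁻¹` of the double centralizer of `S`. -/
theorem stmt13 {π : Type*} [Group π] (b : π) (S : Set π) :
    {g : π | ∀ a ∈ Subgroup.centralizer S, a * g * (b * a * b⁻¹)⁻¹ = g} =
      (fun z : π => z * b⁻¹) ''
        (Subgroup.centralizer ((Subgroup.centralizer S : Subgroup π) : Set π) : Set π) := by
  ext g
  simp only [Set.mem_setOf_eq, Set.mem_image, SetLike.mem_coe, Subgroup.mem_centralizer_iff]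
  constructor
  · intro h
    refine ⟨g * b, fun a ha => ?_, by group⟩
    have := h a ha
    have : a * (g * b) * a⁻¹ = g * b := by
      have h2 : a * g * (b * a⁻¹ * b⁻¹) = g := by simpa [mul_assoc] using this
      calc a * (g * b) * a⁻¹ = (a * g * (b * a⁻¹ * b⁻¹)) * b := by group
        _ = g * b := by rw [h2]
    calc a * (g * b) = (a * (g * b) * a⁻¹) * a := by group
      _ = g * b * a := by rw [this]
  · rintro ⟨z, hz, rfl⟩ a ha
    have := hz a ha
    calc a * (z * b⁻¹) * (b * a * b⁻¹)⁻¹ = (a * z) * (b⁻¹ * (b * a⁻¹ * b⁻¹)) := by group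
      _ = z * a * (b⁻¹ * (b * a⁻¹ * b⁻¹)) := by rw [this]
      _ = z * b⁻¹ := by group
end

section
/- Let π be a group, let b, b' ∈ π and let S, S' ⊆ π. Then H_{b,S} ∩ H_{b',S'} = H_{b, S ∪ S' ∪ {b'⁻¹ b}} as subgroups of π × π; in particular, the family of subgroups of the form H_{b,S} together with the trivial subgroup is closed under pairwise intersections. -/
/-- The subgroup `H_{b,S} = {(a, b a b⁻¹) : a ∈ Z(S)}` of `π × π`. -/
def Hsub {π : Type*} [Group π] (b : π) (S : Set π) : Subgroup (π × π) :=
  Subgroup.map ((MonoidHom.id π).prod (MulAut.conj b).toMonoidHom)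
    (Subgroup.centralizer S)

lemma mem_Hsub {π : Type*} [Group π] (b : π) (S : Set π) (p : π × π) :
    p ∈ Hsub b S ↔ p.1 ∈ Subgroup.centralizer S ∧ p.2 = b * p.1 * b⁻¹ := by
  constructor
  · rintro ⟨a, ha, rfl⟩
    exact ⟨ha, rfl⟩
  · rintro ⟨h1, h2⟩
    exact ⟨p.1, h1, by ext <;> simp [h2.symm]⟩

lemma Hsub_inf {π : Type*} [Group π] (b b' : π) (S S' : Set π) :
    Hsub b S ⊓ Hsub b' S' = Hsub b (S ∪ S' ∪ {b'⁻¹ * b}) := by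
  ext ⟨x, y⟩
  simp only [Subgroup.mem_inf, mem_Hsub, Subgroup.mem_centralizer_iff, Set.mem_union,
    Set.mem_singleton_iff]
  constructor
  · rintro ⟨⟨h1, rfl⟩, h2, h3⟩
    refine ⟨fun g hg => ?_, rfl⟩
    rcases hg with hg | rfl
    · rcases hg with hg | hg
      · exact h1 g hg
      · exact h2 g hg
    · have : b * x * b⁻¹ = b' * x * b'⁻¹ := h3
      calc b'⁻¹ * b * x = b'⁻¹ * (b * x * b⁻¹) * b := by group
        _ = b'⁻¹ * (b' * x * b'⁻¹) * b := by rw [this]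
        _ = x * (b'⁻¹ * b) := by group
  · rintro ⟨h1, rfl⟩
    have hc : (b'⁻¹ * b) * x = x * (b'⁻¹ * b) := h1 _ (Or.inr rfl)
    refine ⟨⟨fun g hg => h1 g (Or.inl (Or.inl hg)), rfl⟩,
      fun g hg => h1 g (Or.inl (Or.inr hg)), ?_⟩
    calc b * x * b⁻¹ = b' * ((b'⁻¹ * b) * x) * b⁻¹ := by group
      _ = b' * (x * (b'⁻¹ * b)) * b⁻¹ := by rw [hc]
      _ = b' * x * b'⁻¹ := by group

/-- `H_{b,S} ∩ H_{b',S'} = H_{b, S ∪ S' ∪ {b'⁻¹ b}}`; in particular, the family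
of subgroups of the form `H_{b,S}` together with the trivial subgroup is closed
under pairwise intersections. -/
theorem stmt15 {π : Type*} [Group π] (b b' : π) (S S' : Set π) :
    Hsub b S ⊓ Hsub b' S' = Hsub b (S ∪ S' ∪ {b'⁻¹ * b}) ∧
    ∀ K K' : Subgroup (π × π),
      ((∃ (c : π) (T : Set π), K = Hsub c T) ∨ K = ⊥) →
      ((∃ (c : π) (T : Set π), K' = Hsub c T) ∨ K' = ⊥) →
      ((∃ (c : π) (T : Set π), K ⊓ K' = Hsub c T) ∨ K ⊓ K' = ⊥) := by
  refine ⟨Hsub_inf b b' S S', ?_⟩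
  rintro K K' (⟨c, T, rfl⟩ | rfl) hK'
  · rcases hK' with ⟨c', T', rfl⟩ | rfl
    · exact Or.inl ⟨c, _, Hsub_inf c c' T T'⟩
    · exact Or.inr (inf_bot_eq _)
  · exact Or.inr (bot_inf_eq _)
end

section
/- Let π be a group, let b, u, v ∈ π and let S ⊆ π. Then the conjugate (u, v) H_{b,S} (u, v)⁻¹ of H_{b,S} by the element (u, v) ∈ π × π equals H_{v b u⁻¹, u S u⁻¹}; in particular, the family of subgroups of the form H_{b,S} is closed under conjugation in π × π. -/
theorem Hsub_conj {π : Type*} [Group π] (b u v : π) (S : Set π) :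
    Subgroup.map (MulAut.conj ((u, v) : π × π)).toMonoidHom (Hsub b S) =
      Hsub (v * b * u⁻¹) ((fun s : π => u * s * u⁻¹) '' S) := by
  ext ⟨x, y⟩
  simp only [Hsub, Subgroup.mem_map, Subgroup.mem_centralizer_iff,
    MonoidHom.prod_apply, MonoidHom.id_apply, MulEquiv.coe_toMonoidHom,
    MulAut.conj_apply, Prod.mk.injEq, Prod.exists, Set.mem_image,
    Prod.mul_def, Prod.inv_mk]
  constructor
  · rintro ⟨a, b', ⟨c, hc, rfl, rfl⟩, h1, h2⟩
    refine ⟨u * c * u⁻¹, fun m hm => ?_, ?_, ?_⟩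
    · obtain ⟨s, hs, rfl⟩ := hm
      have := hc s hs
      group
      rw [mul_assoc u s c, this]
      group
    · exact h1
    · rw [← h2]; group
  · rintro ⟨a, ha, rfl, rfl⟩
    refine ⟨u⁻¹ * a * u, b * (u⁻¹ * a * u) * b⁻¹, ⟨u⁻¹ * a * u, fun s hs => ?_, rfl, rfl⟩, ?_, ?_⟩
    · have := ha (u * s * u⁻¹) ⟨s, hs, rfl⟩
      have h2 : s * (u⁻¹ * a * u) = u⁻¹ * (u * s * u⁻¹ * a) * u := by group
      rw [h2, this]; group
    · group
    · group

/-- The conjugate `(u, v) H_{b,S} (u, v)⁻¹` equals `H_{v b u⁻¹, u S u⁻¹}`; in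
particular, the family of subgroups of the form `H_{b,S}` is closed under
conjugation in `π × π`. -/
theorem stmt16 {π : Type*} [Group π] (b u v : π) (S : Set π) :
    Subgroup.map (MulAut.conj ((u, v) : π × π)).toMonoidHom (Hsub b S) =
      Hsub (v * b * u⁻¹) ((fun s : π => u * s * u⁻¹) '' S) ∧
    ∀ (q : π × π) (c : π) (T : Set π), ∃ (c' : π) (T' : Set π),
      Subgroup.map (MulAut.conj q).toMonoidHom (Hsub c T) = Hsub c' T' := by
  refine ⟨Hsub_conj b u v S, fun q c T => ?_⟩
  exact ⟨q.2 * c * q.1⁻¹, (fun s => q.1 * s * q.1⁻¹) '' T, Hsub_conj c q.1 q.2 T⟩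
end

section
/- Let π be a group, let b, b' ∈ π and let S, S' ⊆ π. Then the index of H_{b,S} ∩ H_{b',S'} in H_{b,S} equals the index of Z(S) ∩ Z(S') ∩ Z({b'⁻¹ b}) in Z(S). -/
theorem conj_eq_conj_iff_commute {π : Type*} [Group π] {b b' a : π} :
    b' * a * b'⁻¹ = b * a * b⁻¹ ↔ Commute a (b'⁻¹ * b) := by
  rw [commute_iff_eq]
  constructor <;> intro h
  · calc a * (b'⁻¹ * b) = b'⁻¹ * (b' * a * b'⁻¹) * b := by group
      _ = b'⁻¹ * (b * a * b⁻¹) * b := by rw [h]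
      _ = b'⁻¹ * b * a := by group
  · calc b' * a * b'⁻¹ = b' * (a * (b'⁻¹ * b)) * b⁻¹ := by group
      _ = b' * (b'⁻¹ * b * a) * b⁻¹ := by rw [h]
      _ = b * a * b⁻¹ := by group

namespace Hsub

variable {π : Type*} [Group π]

theorem mk_mem_iff {b a c : π} {S : Set π} :
    (a, c) ∈ Hsub b S ↔ a ∈ Subgroup.centralizer S ∧ c = b * a * b⁻¹ := by
  simp only [Hsub, Subgroup.mem_map, MonoidHom.prod_apply, MonoidHom.id_apply,
    MulEquiv.coe_toMonoidHom, MulAut.conj_apply, Prod.ext_iff]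
  constructor
  · rintro ⟨a, ha, rfl, rfl⟩
    exact ⟨ha, rfl⟩
  · rintro ⟨ha, rfl⟩
    exact ⟨a, ha, rfl, rfl⟩

theorem comap_graph_conj (b b' : π) (S : Set π) :
    (Hsub b' S).comap ((MonoidHom.id π).prod (MulAut.conj b).toMonoidHom) =
      Subgroup.centralizer S ⊓ Subgroup.centralizer {b'⁻¹ * b} := by
  ext a
  simp only [Subgroup.mem_comap, MonoidHom.prod_apply, MonoidHom.id_apply,
    MulEquiv.coe_toMonoidHom, MulAut.conj_apply, mk_mem_iff, Subgroup.mem_inf,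
    Subgroup.mem_centralizer_singleton_iff, eq_comm (a := b * a * b⁻¹), conj_eq_conj_iff_commute,
    commute_iff_eq]

end Hsub

/-- The index of `H_{b,S} ∩ H_{b',S'}` in `H_{b,S}` equals the index of
`Z(S) ∩ Z(S') ∩ Z({b'⁻¹ b})` in `Z(S)`. -/
theorem stmt17 {π : Type*} [Group π] (b b' : π) (S S' : Set π) :
    (Hsub b S ⊓ Hsub b' S').relIndex (Hsub b S) =
      (Subgroup.centralizer S ⊓ Subgroup.centralizer S' ⊓
          Subgroup.centralizer {b'⁻¹ * b}).relIndex (Subgroup.centralizer S) := by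
  have hZ_one : Subgroup.centralizer ({b⁻¹ * b} : Set π) = ⊤ := by
    rw [inv_mul_cancel, Subgroup.centralizer_eq_top_iff_subset, Set.singleton_subset_iff]
    exact Subgroup.one_mem _
  conv_lhs => rw [Hsub, ← Subgroup.relIndex_comap]
  rw [Subgroup.comap_inf, ← Hsub, Hsub.comap_graph_conj, Hsub.comap_graph_conj, hZ_one,
    inf_top_eq, inf_assoc]
end

section
/- A group π is principal if and only if for all b, b' ∈ π and all finite subsets S, S' ⊆ π, the index of H_{b,S} ∩ H_{b',S'} in H_{b,S} is either 1 or infinite. -/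
/-!
`H_{b,S}` is the image of `Z(S)` under the injective homomorphism `a ↦ (a, b a b⁻¹)`.
A pair `(a, b a b⁻¹)` also lies in `H_{b',S'}` iff `a ∈ Z(S')` and `b a b⁻¹ = b' a b'⁻¹`,
i.e. iff `a` centralizes `S' ∪ {b'⁻¹ b}`. Hence `H_{b,S} ∩ H_{b',S'}` is the image of
`Z(S) ∩ Z(S' ∪ {b'⁻¹ b})`, and its index in `H_{b,S}` is that of
`Z(S) ∩ Z(S' ∪ {b'⁻¹ b})` in `Z(S)`. This settles one direction; the other is the case `b = b' = 1`.
-/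

lemma mul_mul_inv_eq_mul_mul_inv_iff {G : Type*} [Group G] {b b' a : G} :
    b * a * b⁻¹ = b' * a * b'⁻¹ ↔ a * (b'⁻¹ * b) = b'⁻¹ * b * a := by
  constructor <;> intro h
  · calc a * (b'⁻¹ * b) = b'⁻¹ * (b' * a * b'⁻¹) * b := by group
      _ = b'⁻¹ * (b * a * b⁻¹) * b := by rw [h]
      _ = b'⁻¹ * b * a := by group
  · calc b * a * b⁻¹ = b' * (b'⁻¹ * b * a) * b⁻¹ := by group
      _ = b' * (a * (b'⁻¹ * b)) * b⁻¹ := by rw [h]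
      _ = b' * a * b'⁻¹ := by group

namespace Hsub

variable {π : Type*} [Group π]

def graphConj (b : π) : π →* π × π :=
  (MonoidHom.id π).prod (MulAut.conj b).toMonoidHom

lemma graphConj_injective (b : π) : Function.Injective (graphConj b) :=
  fun _ _ h => congrArg Prod.fst h

lemma eq_map_graphConj (b : π) (S : Set π) :
    Hsub b S = (Subgroup.centralizer S).map (graphConj b) :=
  rfl

lemma mem_map_graphConj_iff {b : π} {K : Subgroup π} {p : π × π} :
    p ∈ K.map (graphConj b) ↔ p.1 ∈ K ∧ b * p.1 * b⁻¹ = p.2 := by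
  obtain ⟨x, y⟩ := p
  simp [graphConj]

lemma map_graphConj_inf_map_graphConj (b b' : π) (K K' : Subgroup π) :
    K.map (graphConj b) ⊓ K'.map (graphConj b') =
      (K ⊓ (K' ⊓ Subgroup.centralizer {b'⁻¹ * b})).map (graphConj b) := by
  ext ⟨x, y⟩
  simp only [Subgroup.mem_inf, mem_map_graphConj_iff, Subgroup.mem_centralizer_singleton_iff,
    ← mul_mul_inv_eq_mul_mul_inv_iff]
  constructor
  · rintro ⟨⟨hK, rfl⟩, hK', h⟩
    exact ⟨⟨hK, hK', h.symm⟩, rfl⟩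
  · rintro ⟨⟨hK, hK', h⟩, rfl⟩
    exact ⟨⟨hK, rfl⟩, hK', h.symm⟩

lemma relIndex_inf (b b' : π) (S S' : Set π) :
    (Hsub b S ⊓ Hsub b' S').relIndex (Hsub b S) =
      (Subgroup.centralizer S ⊓
          (Subgroup.centralizer S' ⊓ Subgroup.centralizer {b'⁻¹ * b})).relIndex
        (Subgroup.centralizer S) := by
  rw [eq_map_graphConj, eq_map_graphConj, map_graphConj_inf_map_graphConj,
    Subgroup.relIndex_map_map_of_injective _ _ (graphConj_injective b)]

end Hsub

lemma Subgroup.centralizer_inf_centralizer_singleton {G : Type*} [Group G] (S : Set G) (c : G) :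
    centralizer S ⊓ centralizer {c} = centralizer (insert c S) := by
  rw [Set.insert_eq, inf_comm]
  exact SetLike.ext' Set.centralizer_union.symm

lemma Subgroup.centralizer_singleton_one {G : Type*} [Group G] : centralizer {(1 : G)} = ⊤ :=
  centralizer_eq_top_iff_subset.mpr (Set.singleton_subset_iff.mpr (one_mem _))

/-- A group `π` is principal (for all finite `S, S' ⊆ π` the index of
`Z(S) ∩ Z(S')` in `Z(S)` is `1` or infinite) if and only if for all
`b, b' ∈ π` and all finite `S, S' ⊆ π`, the index of `H_{b,S} ∩ H_{b',S'}` in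
`H_{b,S}` is `1` or infinite (infinite index is encoded by relative index
`0`). -/
theorem stmt18 {π : Type*} [Group π] :
    (∀ S S' : Finset π,
      (Subgroup.centralizer (S : Set π) ⊓ Subgroup.centralizer (S' : Set π)).relIndex
          (Subgroup.centralizer (S : Set π)) = 1 ∨
      (Subgroup.centralizer (S : Set π) ⊓ Subgroup.centralizer (S' : Set π)).relIndex
          (Subgroup.centralizer (S : Set π)) = 0) ↔
    (∀ (b b' : π) (S S' : Finset π),
      (Hsub b (S : Set π) ⊓ Hsub b' (S' : Set π)).relIndex (Hsub b (S : Set π)) = 1 ∨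
      (Hsub b (S : Set π) ⊓ Hsub b' (S' : Set π)).relIndex (Hsub b (S : Set π)) = 0) := by
  classical
  constructor
  · intro hπ b b' S S'
    rw [Hsub.relIndex_inf, Subgroup.centralizer_inf_centralizer_singleton, ← Finset.coe_insert]
    exact hπ S (insert (b'⁻¹ * b) S')
  · intro hH S S'
    simpa [Hsub.relIndex_inf, Subgroup.centralizer_singleton_one] using hH 1 1 S S'
end
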